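/- Let k ≥ 2 be an integer and let a be an integer with 1 ≤ a ≤ k−2 such that a + k − 1 is odd, and set τ = ⌊(k − a − 1)/2⌋. Then for every even integer t with 2 ≤ t ≤ k−1 and every subset S ⊆ {2,…,k} with |S| = t, the Fourier coefficient of the presidential type predicate P at {1} ∪ S satisfies P̂_{{1}∪S} = −2^{−(k−2)} · Σ_{i=0}^{τ} Σ_{j=0}^{τ−i} (−1)^j · C(k−t−1, i) · C(t, j). -/
import Mathlib

open Finset

private def psum (m : ℕ) (n : ℤ) : ℝ :=
  ∑ q ∈ Finset.range (m+1), if (q:ℤ) ≤ n then (m.choose q : ℝ) else 0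

private lemma psum_reflect (m : ℕ) (n : ℤ) :
    psum m n + psum m ((m:ℤ) - 1 - n) = 2 ^ m := by
  unfold psum
  have h := Finset.sum_range_reflect
    (fun q => if (q:ℤ) ≤ (m:ℤ) - 1 - n then (m.choose q : ℝ) else 0) (m+1)
  rw [← h, ← Finset.sum_add_distrib]
  have : ∀ j ∈ Finset.range (m+1),
      ((if (j:ℤ) ≤ n then (m.choose j : ℝ) else 0) +
        (if ((m + 1 - 1 - j : ℕ):ℤ) ≤ (m:ℤ) - 1 - n then (m.choose (m+1-1-j) : ℝ) else 0))
      = (m.choose j : ℝ) := by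
    intro j hj
    rw [Finset.mem_range] at hj
    have hjm : j ≤ m := by omega
    have h1 : (m + 1 - 1 - j : ℕ) = m - j := by omega
    have h2 : ((m - j : ℕ) : ℤ) = (m:ℤ) - j := by omega
    rw [h1, h2, Nat.choose_symm hjm]
    by_cases hc : (j:ℤ) ≤ n
    · rw [if_pos hc, if_neg (by omega)]; ring
    · rw [if_neg hc, if_pos (by omega)]; ring
  rw [Finset.sum_congr rfl this]
  rw [← Nat.cast_sum, Nat.sum_range_choose]
  push_cast; ring

private lemma alt_sum_zero (t : ℕ) (ht : 1 ≤ t) :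
    ∑ s ∈ Finset.range (t+1), (-1:ℝ)^s * (t.choose s : ℝ) = 0 := by
  have h := Int.alternating_sum_range_choose (n := t)
  rw [if_neg (by omega)] at h
  have : ((∑ m ∈ Finset.range (t + 1), (-1:ℤ) ^ m * ↑(t.choose m) : ℤ) : ℝ) = 0 := by
    rw [h]; norm_num
  push_cast at this
  convert this using 2

private lemma key (τ m t : ℕ) (a : ℤ) (ht : 1 ≤ t) (hteven : Even t)
    (hm : (m:ℤ) = 2*τ + a + 1 - t) :
    ∑ s ∈ Finset.range (t+1), (-1:ℝ)^s * (t.choose s : ℝ) *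
      (psum m ((τ:ℤ)+a-s) - psum m ((τ:ℤ)-s))
    = -2 * ∑ s ∈ Finset.range (t+1), (-1:ℝ)^s * (t.choose s : ℝ) * psum m ((τ:ℤ)-s) := by
  have hG : ∑ s ∈ Finset.range (t+1), (-1:ℝ)^s * (t.choose s : ℝ) * psum m ((τ:ℤ)+a-s)
      = - ∑ s ∈ Finset.range (t+1), (-1:ℝ)^s * (t.choose s : ℝ) * psum m ((τ:ℤ)-s) := by
    have hrefl : ∀ s ∈ Finset.range (t+1),
        (-1:ℝ)^s * (t.choose s : ℝ) * psum m ((τ:ℤ)+a-s)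
        = (-1:ℝ)^s * (t.choose s : ℝ) * (2^m) -
          (-1:ℝ)^s * (t.choose s : ℝ) * psum m ((τ:ℤ) - t + s) := by
      intro s _
      have h := psum_reflect m ((τ:ℤ)+a-s)
      have h2 : (m:ℤ) - 1 - ((τ:ℤ)+a-s) = (τ:ℤ) - t + s := by omega
      rw [h2] at h
      have : psum m ((τ:ℤ)+a-s) = 2^m - psum m ((τ:ℤ) - t + s) := by linarith
      rw [this]; ring
    rw [Finset.sum_congr rfl hrefl, Finset.sum_sub_distrib]
    have h1 : ∑ s ∈ Finset.range (t+1), (-1:ℝ)^s * (t.choose s : ℝ) * (2^m : ℝ)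
        = (∑ s ∈ Finset.range (t+1), (-1:ℝ)^s * (t.choose s : ℝ)) * 2^m := by
      rw [Finset.sum_mul]
    rw [h1, alt_sum_zero t ht, zero_mul, zero_sub, neg_inj]
    have h := Finset.sum_range_reflect
      (fun s => (-1:ℝ)^s * (t.choose s : ℝ) * psum m ((τ:ℤ) - t + s)) (t+1)
    rw [← h]
    apply Finset.sum_congr rfl
    intro s hs
    rw [Finset.mem_range] at hs
    have hst : s ≤ t := by omega
    have h1 : (t + 1 - 1 - s : ℕ) = t - s := by omega
    have h3 : (τ:ℤ) - t + ((t - s : ℕ) : ℤ) = (τ:ℤ) - s := by omega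
    have hpow : (-1:ℝ)^(t-s) = (-1:ℝ)^s := by
      rcases Nat.even_or_odd s with h' | h'
      · rw [Even.neg_one_pow ((Nat.even_sub hst).mpr (iff_of_true hteven h')),
          Even.neg_one_pow h']
      · have hodd : Odd (t - s) := by
          rcases h' with ⟨d, hd⟩; rcases hteven with ⟨c, hc⟩
          exact ⟨c - d - 1, by omega⟩
        rw [Odd.neg_one_pow hodd, Odd.neg_one_pow h']
    rw [h1, h3, Nat.choose_symm hst, hpow]
  simp only [mul_sub]
  rw [Finset.sum_sub_distrib, hG]; ring

private lemma Yeq (τ m t : ℕ) :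
    ∑ i ∈ Finset.range (τ+1), ∑ j ∈ Finset.range (τ-i+1),
      (-1:ℝ)^j * (m.choose i : ℝ) * (t.choose j : ℝ)
    = ∑ j ∈ Finset.range (t+1), (-1:ℝ)^j * (t.choose j : ℝ) * psum m ((τ:ℤ)-j) := by
  set M := τ + t + m + 1 with hM
  set F : ℕ → ℕ → ℝ := fun i j =>
    if i + j ≤ τ then (-1:ℝ)^j * (m.choose i : ℝ) * (t.choose j : ℝ) else 0 with hF
  have lhs_eq : ∑ i ∈ Finset.range (τ+1), ∑ j ∈ Finset.range (τ-i+1),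
      (-1:ℝ)^j * (m.choose i : ℝ) * (t.choose j : ℝ)
      = ∑ i ∈ Finset.range M, ∑ j ∈ Finset.range M, F i j := by
    rw [← Finset.sum_subset (Finset.range_subset_range.mpr (by omega : τ + 1 ≤ M))
      (fun i _ hi => ?_)]
    · apply Finset.sum_congr rfl
      intro i hi
      rw [Finset.mem_range] at hi
      rw [← Finset.sum_subset (Finset.range_subset_range.mpr (by omega : τ - i + 1 ≤ M))
        (fun j _ hj => ?_)]
      · apply Finset.sum_congr rfl
        intro j hj
        rw [Finset.mem_range] at hj
        simp only [hF]
        rw [if_pos (show i + j ≤ τ by omega)]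
      · rw [Finset.mem_range, not_lt] at hj
        simp only [hF]
        rw [if_neg (show ¬ i + j ≤ τ by omega)]
    · rw [Finset.mem_range, not_lt] at hi
      apply Finset.sum_eq_zero
      intro j _
      simp only [hF]
      rw [if_neg (show ¬ i + j ≤ τ by omega)]
  have rhs_eq : ∑ j ∈ Finset.range (t+1), (-1:ℝ)^j * (t.choose j : ℝ) * psum m ((τ:ℤ)-j)
      = ∑ j ∈ Finset.range M, ∑ i ∈ Finset.range M, F i j := by
    rw [← Finset.sum_subset (Finset.range_subset_range.mpr (by omega : t + 1 ≤ M))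
      (fun j _ hj => ?_)]
    · apply Finset.sum_congr rfl
      intro j hj
      unfold psum
      rw [Finset.mul_sum]
      rw [← Finset.sum_subset (Finset.range_subset_range.mpr (by omega : m + 1 ≤ M))
        (fun i _ hi => ?_)]
      · apply Finset.sum_congr rfl
        intro i hi
        simp only [hF]
        by_cases hc : i + j ≤ τ
        · rw [if_pos hc, if_pos (by omega : (i:ℤ) ≤ (τ:ℤ) - j)]; ring
        · rw [if_neg hc, if_neg (by omega : ¬ ((i:ℤ) ≤ (τ:ℤ) - j))]; ring
      · rw [Finset.mem_range, not_lt] at hi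
        simp only [hF]
        by_cases hc : i + j ≤ τ
        · rw [if_pos hc, Nat.choose_eq_zero_of_lt (show m < i by omega)]; norm_num
        · rw [if_neg hc]
    · rw [Finset.mem_range, not_lt] at hj
      apply Finset.sum_eq_zero
      intro i _
      simp only [hF]
      by_cases hc : i + j ≤ τ
      · rw [if_pos hc, Nat.choose_eq_zero_of_lt (show t < j by omega)]; norm_num
      · rw [if_neg hc]
  rw [lhs_eq, rhs_eq, Finset.sum_comm]

private lemma sum_powerset_card {α : Type*} [DecidableEq α] (S : Finset α) (h : ℕ → ℝ) :
    ∑ A ∈ S.powerset, h A.card = ∑ s ∈ Finset.range (S.card + 1), (S.card.choose s : ℝ) * h s := by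
  rw [Finset.sum_powerset]
  apply Finset.sum_congr rfl
  intro j _
  have : ∀ A ∈ Finset.powersetCard j S, h A.card = h j := by
    intro A hA
    rw [(Finset.mem_powersetCard.mp hA).2]
  rw [Finset.sum_congr rfl this, Finset.sum_const, Finset.card_powersetCard,
    nsmul_eq_mul]

private lemma cube_sum {k : ℕ} (e : Fin k) (S T : Finset (Fin k)) (hST : Disjoint S T)
    (heS : e ∉ S) (heT : e ∉ T) (hcover : ∀ i : Fin k, i ≠ e → i ∈ S ∪ T)
    (g : (Fin k → Bool) → ℝ) :
    ∑ x : Fin k → Bool, g x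
      = ∑ b : Bool, ∑ A ∈ S.powerset, ∑ B ∈ T.powerset,
          g (fun i => if i = e then b else decide (i ∉ A ∪ B)) := by
  have hprod : ∑ b : Bool, ∑ A ∈ S.powerset, ∑ B ∈ T.powerset,
        g (fun i => if i = e then b else decide (i ∉ A ∪ B))
      = ∑ p ∈ (Finset.univ : Finset Bool) ×ˢ (S.powerset ×ˢ T.powerset),
          g (fun i => if i = e then p.1 else decide (i ∉ p.2.1 ∪ p.2.2)) := by
    rw [Finset.sum_product]
    apply Finset.sum_congr rfl
    intro b _
    rw [Finset.sum_product]
  rw [hprod]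
  apply Finset.sum_bij'
    (i := fun x _ => (x e, (S.filter (fun i => x i = false), T.filter (fun i => x i = false))))
    (j := fun p _ => (fun i => if i = e then p.1 else decide (i ∉ p.2.1 ∪ p.2.2)))
  · intro x _
    simp only [Finset.mem_product, Finset.mem_univ, Finset.mem_powerset, true_and]
    exact ⟨Finset.filter_subset _ _, Finset.filter_subset _ _⟩
  · intro p _
    exact Finset.mem_univ _
  · intro x _
    funext i
    by_cases hie : i = e
    · simp [hie]
    · simp only [hie, if_false]
      have hiST : i ∈ S ∪ T := hcover i hie
      by_cases hx : x i
      · simp [hx]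
      · simp only [Bool.not_eq_true] at hx
        have hmem : i ∈ S.filter (fun j => x j = false) ∪ T.filter (fun j => x j = false) := by
          rcases Finset.mem_union.mp hiST with h | h
          · exact Finset.mem_union_left _ (Finset.mem_filter.mpr ⟨h, hx⟩)
          · exact Finset.mem_union_right _ (Finset.mem_filter.mpr ⟨h, hx⟩)
        simp [hx, hmem]
  · rintro ⟨b, A, B⟩ hp
    simp only [Finset.mem_product, Finset.mem_univ, Finset.mem_powerset, true_and] at hp
    obtain ⟨hA, hB⟩ := hp
    simp only [Prod.mk.injEq]
    refine ⟨by simp, ?_, ?_⟩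
    · ext i
      simp only [Finset.mem_filter]
      constructor
      · rintro ⟨hiS, hval⟩
        have hie : i ≠ e := fun h => heS (h ▸ hiS)
        simp only [hie, if_false, decide_eq_false_iff_not, not_not] at hval
        rcases Finset.mem_union.mp hval with h | h
        · exact h
        · exact absurd (hST.forall_ne_finset hiS (hB h)) (fun hne => hne rfl)
      · intro hiA
        have hiS : i ∈ S := hA hiA
        have hie : i ≠ e := fun h => heS (h ▸ hiS)
        refine ⟨hiS, ?_⟩
        simp [hie, Finset.mem_union, hiA]
    · ext i
      simp only [Finset.mem_filter]
      constructor
      · rintro ⟨hiT, hval⟩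
        have hie : i ≠ e := fun h => heT (h ▸ hiT)
        simp only [hie, if_false, decide_eq_false_iff_not, not_not] at hval
        rcases Finset.mem_union.mp hval with h | h
        · exact absurd ((hST.symm).forall_ne_finset hiT (hA h)) (fun hne => hne rfl)
        · exact h
      · intro hiB
        have hiT : i ∈ T := hB hiB
        have hie : i ≠ e := fun h => heT (h ▸ hiT)
        refine ⟨hiT, ?_⟩
        simp [hie, Finset.mem_union, hiB]
  · intro x hx
    congr 1
    funext i
    by_cases hie : i = e
    · simp [hie]
    · simp only [hie, if_false]
      have hiST : i ∈ S ∪ T := hcover i hie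
      by_cases hxv : x i
      · simp [hxv]
      · simp only [Bool.not_eq_true] at hxv
        have hmem : i ∈ S.filter (fun j => x j = false) ∪ T.filter (fun j => x j = false) := by
          rcases Finset.mem_union.mp hiST with h | h
          · exact Finset.mem_union_left _ (Finset.mem_filter.mpr ⟨h, hxv⟩)
          · exact Finset.mem_union_right _ (Finset.mem_filter.mpr ⟨h, hxv⟩)
        simp [hxv, hmem]

private lemma eval_sum {k : ℕ} (e : Fin k) (S T A B : Finset (Fin k))
    (hA : A ⊆ S) (hB : B ⊆ T) (hST : Disjoint S T) (heS : e ∉ S) (heT : e ∉ T) (b : Bool) :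
    ∑ i ∈ Finset.univ.filter (fun i : Fin k => i ≠ e),
      (if (fun i => if i = e then b else decide (i ∉ A ∪ B)) i then (1:ℤ) else -1)
    = (k:ℤ) - 1 - 2 * ((A.card : ℤ) + B.card) := by
  have hk1 : 1 ≤ k := e.pos
  set u := Finset.univ.filter (fun i : Fin k => i ≠ e) with hu
  have hcard_u : u.card = k - 1 := by
    rw [hu, Finset.filter_ne', Finset.card_erase_of_mem (Finset.mem_univ e),
      Finset.card_univ, Fintype.card_fin]
  have step : ∀ i ∈ u, (if (fun i => if i = e then b else decide (i ∉ A ∪ B)) i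
      then (1:ℤ) else -1) = 1 - 2 * (if i ∈ A ∪ B then (1:ℤ) else 0) := by
    intro i hi
    rw [hu, Finset.mem_filter] at hi
    simp only [hi.2, if_false]
    by_cases hm : i ∈ A ∪ B
    · simp [hm]
    · simp [hm]
  rw [Finset.sum_congr rfl step, Finset.sum_sub_distrib, Finset.sum_const, ← Finset.mul_sum,
    Finset.sum_boole]
  have hsub : A ∪ B ⊆ u := by
    intro i hi
    rw [hu, Finset.mem_filter]
    refine ⟨Finset.mem_univ _, ?_⟩
    rcases Finset.mem_union.mp hi with h | h
    · exact fun he => heS (he ▸ hA h)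
    · exact fun he => heT (he ▸ hB h)
  have : u.filter (fun i => i ∈ A ∪ B) = A ∪ B := by
    rw [Finset.filter_mem_eq_inter, Finset.inter_eq_right.mpr hsub]
  rw [this, Finset.card_union_of_disjoint (hST.mono hA hB), hcard_u]
  simp only [nsmul_eq_mul, mul_one]
  push_cast
  omega

private lemma eval_prod {k : ℕ} (e : Fin k) (S A B : Finset (Fin k))
    (hA : A ⊆ S) (heS : e ∉ S) (hSB : Disjoint S B) (b : Bool) :
    ∏ i ∈ insert e S, (if (fun i => if i = e then b else decide (i ∉ A ∪ B)) i
        then (1:ℝ) else -1)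
    = (if b then (1:ℝ) else -1) * (-1:ℝ)^A.card := by
  rw [Finset.prod_insert heS]
  congr 1
  · simp
  · have step : ∀ i ∈ S, (if (fun i => if i = e then b else decide (i ∉ A ∪ B)) i
        then (1:ℝ) else -1) = (if i ∈ A then (-1:ℝ) else 1) := by
      intro i hi
      have hie : i ≠ e := fun h => heS (h ▸ hi)
      have hiB : i ∉ B := fun h => (hSB.forall_ne_finset hi h) rfl
      simp only [hie, if_false]
      by_cases hiA : i ∈ A
      · simp [hiA]
      · have : i ∉ A ∪ B := by
          rw [Finset.mem_union]; rintro (h | h); exacts [hiA h, hiB h]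
        simp [hiA, this]
    rw [Finset.prod_congr rfl step]
    rw [Finset.prod_ite_mem, Finset.inter_eq_right.mpr hA, Finset.prod_const]

private def Fterm (k : ℕ) (a : ℤ) (b : Bool) (s q : ℕ) : ℝ :=
  (if 0 < a * (if b then (1:ℤ) else -1) + ((k:ℤ) - 1 - 2*((s:ℤ) + q)) then (1:ℝ) else -1) *
    ((if b then (1:ℝ) else -1) * (-1:ℝ)^s)

private lemma endgame (k τ t m : ℕ) (a : ℤ) (ha : 1 ≤ a) (ht : 1 ≤ t) (hteven : Even t)
    (hk2 : 2 ≤ k) (hkτ : (k:ℤ) = 2*τ + a + 2) (hm : (m:ℤ) = 2*τ + a + 1 - t) :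
    ((2:ℝ)^k)⁻¹ * ∑ b : Bool, ∑ s ∈ Finset.range (t+1), (t.choose s : ℝ) *
       ∑ q ∈ Finset.range (m+1), (m.choose q : ℝ) * Fterm k a b s q
    = -(((2:ℝ)^(k-2))⁻¹ * ∑ i ∈ Finset.range (τ+1), ∑ j ∈ Finset.range (τ-i+1),
        (-1:ℝ)^j * (m.choose i : ℝ) * (t.choose j : ℝ)) := by
  have hcomb : ∑ b : Bool, ∑ s ∈ Finset.range (t+1), (t.choose s : ℝ) *
       ∑ q ∈ Finset.range (m+1), (m.choose q : ℝ) * Fterm k a b s q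
      = 2 * ∑ s ∈ Finset.range (t+1), (-1:ℝ)^s * (t.choose s : ℝ) *
          (psum m ((τ:ℤ)+a-s) - psum m ((τ:ℤ)-s)) := by
    rw [Fintype.sum_bool, ← Finset.sum_add_distrib, Finset.mul_sum]
    apply Finset.sum_congr rfl
    intro s _
    rw [← mul_add, ← Finset.sum_add_distrib]
    have inner : ∀ q ∈ Finset.range (m+1),
        (m.choose q : ℝ) * Fterm k a true s q + (m.choose q : ℝ) * Fterm k a false s q
        = 2 * (-1:ℝ)^s *
            ((if (q:ℤ) ≤ (τ:ℤ) + a - s then (m.choose q : ℝ) else 0) -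
             (if (q:ℤ) ≤ (τ:ℤ) - s then (m.choose q : ℝ) else 0)) := by
      intro q _
      unfold Fterm
      norm_num
      split_ifs
      all_goals try ring
      all_goals (exfalso; omega)
    rw [Finset.sum_congr rfl inner]
    unfold psum
    rw [← Finset.sum_sub_distrib, Finset.mul_sum, Finset.mul_sum, Finset.mul_sum]
    apply Finset.sum_congr rfl
    intro q _
    ring
  rw [hcomb, key τ m t a ht hteven hm, ← Yeq τ m t]
  have hkk : (2:ℝ)^k = (2:ℝ)^(k-2) * 4 := by
    have h : k - 2 + 2 = k := by omega
    rw [← h, pow_add]; norm_num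
  rw [hkk]
  have hne : (2:ℝ)^(k-2) ≠ 0 := pow_ne_zero _ two_ne_zero
  field_simp
  ring

private lemma main_lemma {k : ℕ} (hk : 2 ≤ k) (a : ℤ) (ha1 : 1 ≤ a) (ha2 : a ≤ (k:ℤ) - 2)
    (hodd : Odd (a + (k:ℤ) - 1)) (t : ℕ) (ht1 : 2 ≤ t) (ht2 : t ≤ k - 1) (hteven : Even t)
    (e : Fin k) (S : Finset (Fin k)) (heS : e ∉ S) (hcard : S.card = t) :
    ((2:ℝ)^k)⁻¹ * ∑ x : Fin k → Bool,
      (if 0 < a * (if x e then (1:ℤ) else -1) +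
            ∑ i ∈ Finset.univ.filter (fun i : Fin k => i ≠ e), (if x i then (1:ℤ) else -1)
        then (1:ℝ) else -1) *
      ∏ i ∈ insert e S, (if x i then (1:ℝ) else -1) =
      -(((2:ℝ)^(k-2))⁻¹ * ∑ i ∈ Finset.range ((((k:ℤ) - a - 1).toNat)/2 + 1),
        ∑ j ∈ Finset.range ((((k:ℤ) - a - 1).toNat)/2 - i + 1),
          (-1:ℝ)^j * ((k-t-1).choose i : ℝ) * (t.choose j : ℝ)) := by
  set τ := (((k:ℤ) - a - 1).toNat)/2 with hτdef
  have h0 : ((((k:ℤ) - a - 1).toNat) : ℤ) = (k:ℤ) - a - 1 := Int.toNat_of_nonneg (by omega)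
  have hkτ : (k:ℤ) = 2*τ + a + 2 := by
    obtain ⟨c, hc⟩ := hodd
    omega
  set m := k - t - 1 with hmdef
  have hm : (m:ℤ) = 2*τ + a + 1 - t := by omega
  set T : Finset (Fin k) := Finset.univ \ insert e S with hTdef
  have heT : e ∉ T := by simp [hTdef]
  have hST : Disjoint S T :=
    Disjoint.mono_left (Finset.subset_insert e S) Finset.sdiff_disjoint.symm
  have hcover : ∀ i : Fin k, i ≠ e → i ∈ S ∪ T := by
    intro i hie
    by_cases hiS : i ∈ S
    · exact Finset.mem_union_left _ hiS
    · refine Finset.mem_union_right _ ?_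
      rw [hTdef, Finset.mem_sdiff]
      refine ⟨Finset.mem_univ _, fun h => ?_⟩
      rcases Finset.mem_insert.mp h with h | h
      exacts [hie h, hiS h]
  have hTcard : T.card = m := by
    rw [hTdef, Finset.card_sdiff_of_subset (Finset.subset_univ _), Finset.card_insert_of_notMem heS,
      Finset.card_univ, Fintype.card_fin, hcard]
    omega
  rw [cube_sum e S T hST heS heT hcover]
  have hpoint : ∀ (b : Bool), ∀ A ∈ S.powerset, ∀ B ∈ T.powerset,
      (if 0 < a * (if (fun i => if i = e then b else decide (i ∉ A ∪ B)) e then (1:ℤ) else -1) +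
            ∑ i ∈ Finset.univ.filter (fun i : Fin k => i ≠ e),
              (if (fun i => if i = e then b else decide (i ∉ A ∪ B)) i then (1:ℤ) else -1)
        then (1:ℝ) else -1) *
      ∏ i ∈ insert e S, (if (fun i => if i = e then b else decide (i ∉ A ∪ B)) i then (1:ℝ) else -1)
      = Fterm k a b A.card B.card := by
    intro b A hA B hB
    rw [Finset.mem_powerset] at hA hB
    have he0 : (fun i => if i = e then b else decide (i ∉ A ∪ B)) e = b := by simp
    rw [eval_sum e S T A B hA hB hST heS heT b,
      eval_prod e S A B hA heS (hST.mono_right hB) b, he0]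
    rfl
  refine Eq.trans ?_ (endgame k τ t m a ha1 (by omega) hteven hk hkτ hm)
  congr 1
  refine Finset.sum_congr rfl (fun b _ => ?_)
  refine Eq.trans (Finset.sum_congr rfl
    (fun A hA => Finset.sum_congr rfl (fun B hB => hpoint b A hA B hB))) ?_
  have step2 : ∀ A ∈ S.powerset,
      (∑ B ∈ T.powerset, Fterm k a b A.card B.card)
      = ∑ q ∈ Finset.range (m+1), (m.choose q : ℝ) * Fterm k a b A.card q := by
    intro A _
    have h := sum_powerset_card T (fun q => Fterm k a b A.card q)
    rw [hTcard] at h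
    exact h
  rw [Finset.sum_congr rfl step2]
  have h := sum_powerset_card S
    (fun s => ∑ q ∈ Finset.range (m+1), (m.choose q : ℝ) * Fterm k a b s q)
  rw [hcard] at h
  exact h

/-- Fourier coefficient of the presidential type predicate
`P(x) = sign(a·x₁ + x₂ + ⋯ + x_k)` at `{1} ∪ S` where `S` is a set of `t` citizens
(so `0 ∉ S`), for even `t` with `2 ≤ t ≤ k − 1`:
`P̂_{{1}∪S} = −2^{−(k−2)} · Σ_{i=0}^{τ} Σ_{j=0}^{τ−i} (−1)^j C(k−t−1, i) C(t, j)`,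
where `τ = ⌊(k − a − 1)/2⌋`. Booleans encode `{−1,1}`: `true ↦ 1`, `false ↦ −1`. -/
theorem stmt_2 (k : ℕ) (hk : 2 ≤ k) (a : ℤ) (ha1 : 1 ≤ a) (ha2 : a ≤ (k : ℤ) - 2)
    (hodd : Odd (a + (k : ℤ) - 1)) (t : ℕ) (ht1 : 2 ≤ t) (ht2 : t ≤ k - 1) (hteven : Even t)
    (S : Finset (Fin k)) (hS : (⟨0, by omega⟩ : Fin k) ∉ S) (hcard : S.card = t) :
    ((2 : ℝ) ^ k)⁻¹ *
        ∑ x : Fin k → Bool,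
          (if 0 < a * (if x ⟨0, by omega⟩ then (1 : ℤ) else -1) +
                ∑ i ∈ Finset.univ.filter (fun i : Fin k => i ≠ ⟨0, by omega⟩),
                  (if x i then (1 : ℤ) else -1)
            then (1 : ℝ) else -1) *
          ∏ i ∈ insert (⟨0, by omega⟩ : Fin k) S, (if x i then (1 : ℝ) else -1) =
      -(((2 : ℝ) ^ (k - 2))⁻¹ *
        ∑ i ∈ Finset.range ((((k : ℤ) - a - 1).toNat) / 2 + 1),
          ∑ j ∈ Finset.range ((((k : ℤ) - a - 1).toNat) / 2 - i + 1),
            (-1 : ℝ) ^ j * ((k - t - 1).choose i : ℝ) * (t.choose j : ℝ)) := by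
  exact main_lemma hk a ha1 ha2 hodd t ht1 ht2 hteven ⟨0, by omega⟩ S hS hcard
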